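/- arXiv:2402.11269 — 5 statements merged into one kernel-verified Lean document; each statement's English description precedes it below -/
import Mathlib

section
/- For any prime p and any randomized generic-group discrete logarithm solver modeled as follows: the solver, on uniformly random x ∈ Z_p and seed r, produces a sequence of at most T+2 affine-linear polynomials P_1 = 1, P_2 = X, P_3, ..., P_{T+2} in Z_p[X] where each P_k for k ≥ 3 is either a constant or of the form P_i ± P_j with i, j < k (determined by r only), and the solver's output is a function of r and of the set of 'collision pairs' {(i,j) : P_i(x) = P_j(x)}. If the solver outputs x with probability at least ε (over x and r), then ε ≤ (T+3)^2 / (2p). -/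
/-- Generic-group DL lower bound: a solver producing (as a function of its seed `r` only)
a sequence of at most `T+2` affine-linear polynomials `P₁ = 1`, `P₂ = X`, and each later
one a constant or `Pᵢ ± Pⱼ`, whose output is a function of `r` and of the collision
pattern `{(i,j) : Pᵢ(x) = Pⱼ(x)}`, outputs `x` with probability at most `(T+3)²/(2p)`. -/
theorem stmt6 {p : ℕ} [Fact (Nat.Prime p)] (T : ℕ) {R : Type*} [Fintype R] [Nonempty R]
    (seq : R → Fin (T + 2) → ZMod p × ZMod p)
    (hseq1 : ∀ r, seq r ⟨0, by omega⟩ = (0, 1))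
    (hseq2 : ∀ r, seq r ⟨1, by omega⟩ = (1, 0))
    (hseq : ∀ r (k : Fin (T + 2)), 2 ≤ (k : ℕ) →
      (∃ c : ZMod p, seq r k = (0, c)) ∨
      ∃ i j : Fin (T + 2), (i : ℕ) < (k : ℕ) ∧ (j : ℕ) < (k : ℕ) ∧
        (seq r k = seq r i + seq r j ∨ seq r k = seq r i - seq r j))
    (out : R → (Fin (T + 2) → Fin (T + 2) → Bool) → ZMod p)
    (ε : ℝ)
    (hε : ε ≤ ((Finset.univ.filter fun xr : ZMod p × R =>
        out xr.2 (fun i j => decide ((seq xr.2 i).1 * xr.1 + (seq xr.2 i).2 =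
          (seq xr.2 j).1 * xr.1 + (seq xr.2 j).2)) = xr.1).card : ℝ) /
      ((p : ℝ) * (Fintype.card R : ℝ))) :
    ε ≤ ((T : ℝ) + 3) ^ 2 / (2 * (p : ℝ)) := by
  classical
  have hpprime : p.Prime := Fact.out
  -- per-seed bound
  have key : ∀ r : R, 2 * (Finset.univ.filter fun x : ZMod p =>
      out r (fun i j => decide ((seq r i).1 * x + (seq r i).2 =
        (seq r j).1 * x + (seq r j).2)) = x).card ≤ (T + 3)^2 := by
    intro r
    set bad : Finset (ZMod p) := Finset.univ.biUnion (fun j : Fin (T+2) =>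
      (Finset.Iio j).biUnion (fun i =>
        Finset.univ.filter (fun x => seq r i ≠ seq r j ∧
          (seq r i).1 * x + (seq r i).2 = (seq r j).1 * x + (seq r j).2))) with hbad
    have hsub : (Finset.univ.filter fun x : ZMod p =>
        out r (fun i j => decide ((seq r i).1 * x + (seq r i).2 =
          (seq r j).1 * x + (seq r j).2)) = x) ⊆
        insert (out r (fun i j => decide (seq r i = seq r j))) bad := by
      intro x hx
      simp only [Finset.mem_filter, Finset.mem_univ, true_and] at hx
      by_cases hxb : x ∈ bad
      · exact Finset.mem_insert_of_mem hxb
      · have hpat : (fun i j => decide ((seq r i).1 * x + (seq r i).2 =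
            (seq r j).1 * x + (seq r j).2)) = fun i j => decide (seq r i = seq r j) := by
          funext i j
          by_cases hij : seq r i = seq r j
          · simp [hij]
          · have hne : ¬ ((seq r i).1 * x + (seq r i).2 = (seq r j).1 * x + (seq r j).2) := by
              intro heq
              apply hxb
              rw [hbad]
              simp only [Finset.mem_biUnion, Finset.mem_Iio, Finset.mem_filter,
                Finset.mem_univ, true_and]
              rcases lt_trichotomy i j with h | h | h
              · exact ⟨j, i, h, hij, heq⟩
              · exact absurd (congrArg (seq r) h) hij
              · exact ⟨i, j, h, fun e => hij e.symm, heq.symm⟩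
            simp [hij, hne]
        rw [hpat] at hx
        rw [← hx]
        exact Finset.mem_insert_self _ _
    have hbadcard : bad.card ≤ ∑ j : Fin (T+2), (j : ℕ) := by
      calc bad.card ≤ ∑ j : Fin (T+2), ((Finset.Iio j).biUnion (fun i =>
            Finset.univ.filter (fun x => seq r i ≠ seq r j ∧
              (seq r i).1 * x + (seq r i).2 = (seq r j).1 * x + (seq r j).2))).card :=
            Finset.card_biUnion_le
        _ ≤ ∑ j : Fin (T+2), ∑ i ∈ Finset.Iio j, (Finset.univ.filter
              (fun x => seq r i ≠ seq r j ∧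
              (seq r i).1 * x + (seq r i).2 = (seq r j).1 * x + (seq r j).2)).card :=
            Finset.sum_le_sum (fun j _ => Finset.card_biUnion_le)
        _ ≤ ∑ j : Fin (T+2), ∑ i ∈ Finset.Iio j, 1 := by
            refine Finset.sum_le_sum (fun j _ => Finset.sum_le_sum (fun i _ => ?_))
            rw [Finset.card_le_one]
            rintro x hx y hy
            simp only [Finset.mem_filter, Finset.mem_univ, true_and] at hx hy
            obtain ⟨hne, hx⟩ := hx
            obtain ⟨-, hy⟩ := hy
            have ha : (seq r i).1 ≠ (seq r j).1 := by
              intro ha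
              apply hne
              have : (seq r i).2 = (seq r j).2 := by
                have := hx
                rw [ha] at this
                exact add_left_cancel this
              exact Prod.ext ha this
            have h1 : ((seq r i).1 - (seq r j).1) * x = (seq r j).2 - (seq r i).2 := by
              ring_nf
              linear_combination hx
            have h2 : ((seq r i).1 - (seq r j).1) * y = (seq r j).2 - (seq r i).2 := by
              ring_nf
              linear_combination hy
            have hd : (seq r i).1 - (seq r j).1 ≠ 0 := sub_ne_zero_of_ne ha
            exact mul_left_cancel₀ hd (h1.trans h2.symm)
        _ = ∑ j : Fin (T+2), (j : ℕ) := by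
            refine Finset.sum_congr rfl (fun j _ => ?_)
            rw [Finset.sum_const, smul_eq_mul, mul_one, Fin.card_Iio]
    have hsum : (∑ j : Fin (T+2), (j : ℕ)) * 2 = (T+2) * (T+1) := by
      rw [Fin.sum_univ_eq_sum_range (fun i => i) (T+2), Finset.sum_range_id_mul_two]
      rfl
    have hc1 : (Finset.univ.filter fun x : ZMod p =>
        out r (fun i j => decide ((seq r i).1 * x + (seq r i).2 =
          (seq r j).1 * x + (seq r j).2)) = x).card ≤ 1 + bad.card := by
      calc _ ≤ (insert (out r (fun i j => decide (seq r i = seq r j))) bad).card :=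
            Finset.card_le_card hsub
        _ ≤ 1 + bad.card := by
            have := Finset.card_insert_le (out r (fun i j => decide (seq r i = seq r j))) bad
            omega
    nlinarith [hbadcard, hsum, hc1]
  -- sum over seeds
  set F := (Finset.univ.filter fun xr : ZMod p × R =>
      out xr.2 (fun i j => decide ((seq xr.2 i).1 * xr.1 + (seq xr.2 i).2 =
        (seq xr.2 j).1 * xr.1 + (seq xr.2 j).2)) = xr.1) with hF
  have hsplit : F.card = ∑ r : R, (Finset.univ.filter fun x : ZMod p =>
      out r (fun i j => decide ((seq r i).1 * x + (seq r i).2 =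
        (seq r j).1 * x + (seq r j).2)) = x).card := by
    rw [hF, Finset.card_filter]
    rw [Fintype.sum_prod_type]
    rw [Finset.sum_comm]
    refine Finset.sum_congr rfl (fun r _ => ?_)
    rw [Finset.card_filter]
  have htot : 2 * F.card ≤ Fintype.card R * (T + 3)^2 := by
    rw [hsplit, Finset.mul_sum]
    calc ∑ r : R, 2 * _ ≤ ∑ r : R, (T+3)^2 := Finset.sum_le_sum (fun r _ => key r)
      _ = Fintype.card R * (T+3)^2 := by rw [Finset.sum_const, smul_eq_mul, Finset.card_univ]
  -- real arithmetic
  have hp0 : (0:ℝ) < p := by exact_mod_cast hpprime.pos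
  have hR0 : (0:ℝ) < Fintype.card R := by exact_mod_cast Fintype.card_pos
  refine hε.trans ?_
  rw [div_le_div_iff₀ (by positivity) (by positivity)]
  have htotR : (2 : ℝ) * F.card ≤ (Fintype.card R : ℝ) * ((T:ℝ) + 3)^2 := by
    have := htot
    have h' : ((2 * F.card : ℕ) : ℝ) ≤ ((Fintype.card R * (T + 3)^2 : ℕ) : ℝ) := by
      exact_mod_cast this
    push_cast at h'
    convert h' using 2 <;> push_cast <;> ring
  nlinarith [htotR, hp0, hR0]
end

section
/- Let p be prime and m ≥ 1. Any function f : Z_p^m × R → C together with g : C × R → Z_p^m satisfying g(f(x,r),r) = x with probability ε over uniform x ∈ Z_p^m and r ∈ R, where |C| ≤ (binom(B,m) + 1) with B = binom(T+2m+1, 2), satisfies ε ≤ (e(T+2m+1)^2 / (2 m p))^m · (constant factor), i.e., ε ≤ (binom(B,m)+1)/p^m and binom(B,m)+1 ≤ ( e (T+2m+1)^2 / (2m) )^m. -/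
/-- Quantitative core of the m-MDL lower bound: a compression of `(ZMod p)^m` into a code
of size at most `choose(B, m) + 1` with `B = choose(T+2m+1, 2)` succeeds with probability
`ε ≤ (choose(B,m)+1)/p^m`, and `choose(B,m)+1 ≤ (e(T+2m+1)²/(2m))^m`. -/
theorem stmt7 {p T m : ℕ} [Fact (Nat.Prime p)] (hT : 1 ≤ T) (hm : 1 ≤ m)
    {R C : Type*} [Fintype R] [Nonempty R] [Fintype C]
    (f : (Fin m → ZMod p) × R → C) (g : C × R → Fin m → ZMod p)
    (hC : Fintype.card C ≤ Nat.choose (Nat.choose (T + 2 * m + 1) 2) m + 1)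
    (ε : ℝ)
    (hε : ε ≤ ((Finset.univ.filter fun xr : (Fin m → ZMod p) × R =>
        g (f xr, xr.2) = xr.1).card : ℝ) / ((p : ℝ) ^ m * (Fintype.card R : ℝ))) :
    ε ≤ ((Nat.choose (Nat.choose (T + 2 * m + 1) 2) m + 1 : ℕ) : ℝ) / (p : ℝ) ^ m ∧
      ((Nat.choose (Nat.choose (T + 2 * m + 1) 2) m + 1 : ℕ) : ℝ) ≤
        (Real.exp 1 * ((T : ℝ) + 2 * m + 1) ^ 2 / (2 * m)) ^ m := by
  have hp : 0 < p := (Fact.out : p.Prime).pos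
  set B := Nat.choose (T + 2 * m + 1) 2 with hB
  set K := Nat.choose B m + 1 with hK
  have hRpos : (0 : ℝ) < Fintype.card R := by
    exact_mod_cast Fintype.card_pos
  have hppos : (0 : ℝ) < (p : ℝ) ^ m := by positivity
  constructor
  · -- counting part
    have hcard : (Finset.univ.filter fun xr : (Fin m → ZMod p) × R =>
        g (f xr, xr.2) = xr.1).card ≤ Fintype.card C * Fintype.card R := by
      have : (Finset.univ.filter fun xr : (Fin m → ZMod p) × R =>
          g (f xr, xr.2) = xr.1).card ≤ (Finset.univ : Finset (C × R)).card := by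
        apply Finset.card_le_card_of_injOn (fun xr => (f xr, xr.2))
        · intro a _; exact Finset.mem_univ _
        · intro a ha b hb hab
          simp only [Finset.mem_coe, Finset.mem_filter] at ha hb
          have hab' : (f a, a.2) = (f b, b.2) := hab
          have h2 : a.2 = b.2 := (Prod.ext_iff.mp hab').2
          have h1 : a.1 = b.1 := by
            rw [← ha.2, ← hb.2, hab']
          exact Prod.ext h1 h2
      simpa [Finset.card_univ, Fintype.card_prod] using this
    calc ε ≤ _ := hε
      _ ≤ ((Fintype.card C * Fintype.card R : ℕ) : ℝ) / ((p : ℝ) ^ m * Fintype.card R) := by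
          apply div_le_div_of_nonneg_right ?_ (by positivity)
          · exact_mod_cast hcard
      _ ≤ ((K * Fintype.card R : ℕ) : ℝ) / ((p : ℝ) ^ m * Fintype.card R) := by
          apply div_le_div_of_nonneg_right ?_ (by positivity)
          exact_mod_cast Nat.mul_le_mul_right _ hC
      _ = (K : ℝ) / (p : ℝ) ^ m := by
          push_cast
          field_simp
  · -- binomial estimate
    have hmB : m ≤ B := by
      have h1 : Nat.choose (m + 2) 2 ≤ B := Nat.choose_le_choose 2 (by omega)
      have h2 : m ≤ Nat.choose (m + 2) 2 := by
        rw [Nat.choose_two_right]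
        have : 2 * m ≤ (m + 2) * (m + 2 - 1) := by ring_nf; omega
        omega
      omega
    have hKle : K ≤ Nat.choose (B + 1) m := by
      obtain ⟨m', rfl⟩ : ∃ m', m = m' + 1 := ⟨m - 1, by omega⟩
      rw [Nat.choose_succ_succ']
      have : 1 ≤ Nat.choose B m' := Nat.choose_pos (by omega)
      omega
    have hmR : (0 : ℝ) < m := by exact_mod_cast hm
    have hfac : (m : ℝ) ^ m / (Nat.factorial m) ≤ Real.exp 1 ^ m := by
      have h1 : (m : ℝ) ^ m / (Nat.factorial m) ≤ Real.exp m := by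
        have := Real.sum_le_exp_of_nonneg (x := (m : ℝ)) (by positivity) (m + 1)
        refine le_trans ?_ this
        have := Finset.single_le_sum (f := fun i => (m : ℝ) ^ i / Nat.factorial i)
          (fun i _ => by positivity) (Finset.self_mem_range_succ m)
        simpa using this
      calc (m : ℝ) ^ m / (Nat.factorial m) ≤ Real.exp m := h1
        _ = Real.exp 1 ^ m := by rw [← Real.exp_nat_mul]; norm_num
    have hB1 : ((B : ℝ) + 1) ≤ ((T : ℝ) + 2 * m + 1) ^ 2 / 2 := by
      rw [hB, Nat.cast_choose_two]
      push_cast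
      nlinarith [hmR, (by exact_mod_cast hT : (1:ℝ) ≤ T)]
    calc (K : ℝ) ≤ (Nat.choose (B + 1) m : ℝ) := by exact_mod_cast hKle
      _ ≤ ((B + 1 : ℝ)) ^ m / Nat.factorial m := by
          have := Nat.choose_le_pow_div (α := ℝ) m (B + 1)
          push_cast at this ⊢
          exact this
      _ ≤ (Real.exp 1 * ((B : ℝ) + 1) / m) ^ m := by
          rw [div_pow, mul_pow]
          rw [div_le_div_iff₀ (by positivity) (by positivity)]
          calc ((B:ℝ)+1)^m * (m:ℝ)^m = (m:ℝ)^m * ((B:ℝ)+1)^m := by ring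
            _ ≤ (Real.exp 1 ^ m * Nat.factorial m) * ((B:ℝ)+1)^m := by
                apply mul_le_mul_of_nonneg_right ?_ (by positivity)
                rw [div_le_iff₀ (by positivity)] at hfac
                linarith [hfac]
            _ = Real.exp 1 ^ m * ((B:ℝ)+1) ^ m * Nat.factorial m := by ring
      _ ≤ (Real.exp 1 * ((T : ℝ) + 2 * m + 1) ^ 2 / (2 * m)) ^ m := by
          apply pow_le_pow_left₀ (by positivity)
          rw [div_le_div_iff₀ (by positivity) (by positivity)]
          have he : (0:ℝ) < Real.exp 1 := Real.exp_pos 1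
          have h3 := mul_le_mul_of_nonneg_left hB1 he.le
          nlinarith [h3, hmR]
end

section
/- Let p be prime. Any encoding/decoding pair for messages in Z_p^{m+q} whose encodings consist of (i) a choice of n elements from a set of size binom(T+m+n, 2), (ii) q elements of Z_p, and (iii) m−n elements of Z_p, and which succeeds with probability ε over uniform messages, satisfies ε ≤ binom(binom(T+m+n,2), n) / p^n; in particular ε = O((e(T+m+n+1)^2 / p)^n). -/
/-- Quantitative core of the one-more-DL lower bound: an encoding of messages in
`(ZMod p)^{m+q}` consisting of `n` positions among `choose(T+m+n,2)`, `q` elements of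
`ZMod p` and `m-n` elements of `ZMod p` succeeds with probability
`ε ≤ choose(choose(T+m+n,2), n)/p^n = O((e(T+m+n+1)²/p)^n)`. -/
theorem stmt13 {p T m n q : ℕ} [Fact (Nat.Prime p)] (hn : 1 ≤ n) (hnm : n ≤ m)
    {R : Type*} [Fintype R] [Nonempty R]
    (Encode : (Fin (m + q) → ZMod p) × R →
      {s : Finset (Fin (Nat.choose (T + m + n) 2)) // s.card = n} ×
        (Fin q → ZMod p) × (Fin (m - n) → ZMod p))
    (Decode : ({s : Finset (Fin (Nat.choose (T + m + n) 2)) // s.card = n} ×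
        (Fin q → ZMod p) × (Fin (m - n) → ZMod p)) × R → Fin (m + q) → ZMod p)
    (ε : ℝ)
    (hε : ε ≤ ((Finset.univ.filter fun xr : (Fin (m + q) → ZMod p) × R =>
        Decode (Encode xr, xr.2) = xr.1).card : ℝ) /
      ((p : ℝ) ^ (m + q) * (Fintype.card R : ℝ))) :
    ε ≤ (Nat.choose (Nat.choose (T + m + n) 2) n : ℝ) / (p : ℝ) ^ n ∧
      ε ≤ (Real.exp 1 * ((T : ℝ) + m + n + 1) ^ 2 / (p : ℝ)) ^ n := by
  have hpp : p.Prime := Fact.out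
  have hp1 : (1 : ℝ) < p := by exact_mod_cast hpp.one_lt
  have hp0 : (0 : ℝ) < p := lt_trans one_pos hp1
  have hR0 : (0 : ℝ) < Fintype.card R := by
    exact_mod_cast Fintype.card_pos
  set C := Nat.choose (Nat.choose (T + m + n) 2) n with hC
  set S := (Finset.univ.filter fun xr : (Fin (m + q) → ZMod p) × R =>
        Decode (Encode xr, xr.2) = xr.1) with hS
  -- counting: the encoding map is injective on successful inputs
  have hcount : S.card ≤ C * (p ^ q * p ^ (m - n)) * Fintype.card R := by
    have hinj : Set.InjOn (fun xr : (Fin (m + q) → ZMod p) × R => (Encode xr, xr.2))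
        ↑S := by
      intro a ha b hb hab
      simp only [hS, Finset.coe_filter, Set.mem_setOf_eq] at ha hb
      simp only [Prod.mk.injEq] at hab
      obtain ⟨h1, h2⟩ := hab
      have : a.1 = b.1 := by
        rw [← ha.2, ← hb.2, h1, h2]
      exact Prod.ext this h2
    have := Finset.card_le_card_of_injOn
      (fun xr : (Fin (m + q) → ZMod p) × R => (Encode xr, xr.2))
      (fun _ _ => Finset.mem_univ _) hinj
    calc S.card ≤ (Finset.univ :
          Finset (({s : Finset (Fin (Nat.choose (T + m + n) 2)) // s.card = n} ×
            (Fin q → ZMod p) × (Fin (m - n) → ZMod p)) × R)).card := this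
      _ = C * (p ^ q * p ^ (m - n)) * Fintype.card R := by
          simp [Fintype.card_prod, Fintype.card_finset_len, Fintype.card_fun,
            ZMod.card, hC, mul_assoc]
  -- first bound
  have key : ε ≤ (C : ℝ) / (p : ℝ) ^ n := by
    refine le_trans hε ?_
    have hpow : (p : ℝ) ^ (m + q) = (p : ℝ) ^ n * (p : ℝ) ^ (q + (m - n)) := by
      rw [← pow_add]; congr 1; omega
    rw [hpow]
    rw [div_le_div_iff₀ (by positivity) (by positivity)]
    have : (S.card : ℝ) ≤ (C : ℝ) * ((p : ℝ) ^ q * (p : ℝ) ^ (m - n)) * Fintype.card R := by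
      exact_mod_cast hcount
    calc (S.card : ℝ) * (p : ℝ) ^ n
        ≤ (C : ℝ) * ((p : ℝ) ^ q * (p : ℝ) ^ (m - n)) * Fintype.card R * (p : ℝ) ^ n := by
          apply mul_le_mul_of_nonneg_right this (by positivity)
      _ = (C : ℝ) * ((p : ℝ) ^ n * (p : ℝ) ^ (q + (m - n)) * (Fintype.card R : ℝ)) := by
          rw [pow_add]; ring
  refine ⟨key, le_trans key ?_⟩
  -- second bound: C ≤ (e * (T+m+n+1)^2)^n
  have hCle : (C : ℝ) ≤ (Real.exp 1 * ((T : ℝ) + m + n + 1) ^ 2) ^ n := by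
    have h1 : C ≤ (Nat.choose (T + m + n) 2) ^ n := Nat.choose_le_pow _ _
    have h2 : Nat.choose (T + m + n) 2 ≤ (T + m + n + 1) ^ 2 := by
      calc Nat.choose (T + m + n) 2 ≤ (T + m + n) ^ 2 := Nat.choose_le_pow _ _
        _ ≤ (T + m + n + 1) ^ 2 := Nat.pow_le_pow_left (by omega) _
    have h3 : (C : ℝ) ≤ (((T : ℝ) + m + n + 1) ^ 2) ^ n := by
      have : (C : ℝ) ≤ (((T + m + n + 1 : ℕ) : ℝ) ^ 2) ^ n := by
        exact_mod_cast le_trans h1 (Nat.pow_le_pow_left h2 n)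
      simpa using this
    calc (C : ℝ) ≤ (((T : ℝ) + m + n + 1) ^ 2) ^ n := h3
      _ ≤ (Real.exp 1 * ((T : ℝ) + m + n + 1) ^ 2) ^ n := by
          apply pow_le_pow_left₀ (by positivity)
          exact le_mul_of_one_le_left (sq_nonneg _) (Real.one_le_exp zero_le_one)
  rw [div_pow]
  exact (div_le_div_iff_of_pos_right (by positivity)).mpr hCle
end

section
/- Let p be prime. For uniform x ∈ Z_p, any adversary that adaptively produces at most E pairs of affine-linear polynomials and makes at most T_DDH queries each specifying a triple (P, Q, R) of affine-linear polynomials in Z_p[X] with P·Q − R nonzero, outputs x correctly with probability at most (E + 2·T_DDH + 1)/p, where correctness of a guess z means z = x. -/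
/-- History of oracle answers for an adaptive gap-DL adversary: at each step, depending on
the history, it either queries an equality of two affine-linear polynomials (a pair) or a
DDH triple `(P, Q, R)`, and learns whether it collides at `x`. -/
def runGap {p : ℕ}
    (A : List Bool → ((ZMod p × ZMod p) × (ZMod p × ZMod p)) ⊕
      ((ZMod p × ZMod p) × (ZMod p × ZMod p) × (ZMod p × ZMod p)))
    (x : ZMod p) : ℕ → List Bool
  | 0 => []
  | n + 1 =>
    let h := runGap A x n
    h ++ [match A h with
      | Sum.inl q => decide (q.1.1 * x + q.1.2 = q.2.1 * x + q.2.2)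
      | Sum.inr q => decide ((q.1.1 * x + q.1.2) * (q.2.1.1 * x + q.2.1.2) =
          q.2.2.1 * x + q.2.2.2)]

variable {p : ℕ}
  (A : List Bool → ((ZMod p × ZMod p) × (ZMod p × ZMod p)) ⊕
      ((ZMod p × ZMod p) × (ZMod p × ZMod p) × (ZMod p × ZMod p)))
  (x : ZMod p)

/-- The oracle answer for a given history. -/
def ansG (h : List Bool) : Bool :=
  match A h with
  | Sum.inl q => decide (q.1.1 * x + q.1.2 = q.2.1 * x + q.2.2)
  | Sum.inr q => decide ((q.1.1 * x + q.1.2) * (q.2.1.1 * x + q.2.1.2) =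
      q.2.2.1 * x + q.2.2.2)

lemma runGap_succ (n : ℕ) :
    runGap A x (n + 1) = runGap A x n ++ [ansG A x (runGap A x n)] := rfl

lemma runGap_length (n : ℕ) : (runGap A x n).length = n := by
  induction n with
  | zero => rfl
  | succ n ih => simp [runGap_succ, ih]

lemma runGap_prefix {k n : ℕ} (h : k ≤ n) : runGap A x k <+: runGap A x n := by
  induction n with
  | zero => simpa using (Nat.le_zero.mp h) ▸ List.prefix_refl _
  | succ n ih =>
    rcases Nat.lt_or_ge k (n+1) with h1 | h1
    · exact (ih (Nat.lt_succ_iff.mp h1)).trans (by rw [runGap_succ]; exact List.prefix_append _ _)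
    · have : k = n + 1 := le_antisymm h h1
      subst this; exact List.prefix_refl _

lemma runGap_rep_of_le {k n : ℕ} (hkn : k ≤ n)
    (h : runGap A x n = List.replicate n false) :
    runGap A x k = List.replicate k false := by
  have hp := runGap_prefix A x hkn
  rw [h] at hp
  rw [List.eq_replicate_iff]
  exact ⟨runGap_length A x k, fun b hb => List.eq_of_mem_replicate (hp.subset hb)⟩

lemma pair_card [Fact (Nat.Prime p)] (q : (ZMod p × ZMod p) × (ZMod p × ZMod p))
    (hq : q.1 ≠ q.2) :
    (Finset.univ.filter fun x : ZMod p =>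
      q.1.1 * x + q.1.2 = q.2.1 * x + q.2.2).card ≤ 1 := by
  rw [Finset.card_le_one]
  intro a ha b hb
  simp only [Finset.mem_filter] at ha hb
  by_cases hs : q.1.1 = q.2.1
  · exfalso
    apply hq
    have : q.1.2 = q.2.2 := by
      have := ha.2; rw [hs] at this; exact add_left_cancel this
    exact Prod.ext hs this
  · have h1 : (q.1.1 - q.2.1) * a = q.2.2 - q.1.2 := by linear_combination ha.2
    have h2 : (q.1.1 - q.2.1) * b = q.2.2 - q.1.2 := by linear_combination hb.2
    exact mul_left_cancel₀ (sub_ne_zero.mpr hs) (h1.trans h2.symm)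

lemma triple_card [Fact (Nat.Prime p)]
    (q : (ZMod p × ZMod p) × (ZMod p × ZMod p) × (ZMod p × ZMod p))
    (hq : ¬(q.1.1 * q.2.1.1 = 0 ∧ q.1.1 * q.2.1.2 + q.1.2 * q.2.1.1 = q.2.2.1 ∧
        q.1.2 * q.2.1.2 = q.2.2.2)) :
    (Finset.univ.filter fun x : ZMod p =>
      (q.1.1 * x + q.1.2) * (q.2.1.1 * x + q.2.1.2) = q.2.2.1 * x + q.2.2.2).card ≤ 2 := by
  set c2 := q.1.1 * q.2.1.1 with hc2
  set c1 := q.1.1 * q.2.1.2 + q.1.2 * q.2.1.1 - q.2.2.1 with hc1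
  set c0 := q.1.2 * q.2.1.2 - q.2.2.2 with hc0
  set P : Polynomial (ZMod p) :=
    Polynomial.C c2 * Polynomial.X ^ 2 + Polynomial.C c1 * Polynomial.X + Polynomial.C c0
    with hP
  have hPne : P ≠ 0 := by
    intro h0
    apply hq
    have e2 : c2 = 0 := by
      have := congrArg (fun r => Polynomial.coeff r 2) h0
      simpa [hP] using this
    have e1 : c1 = 0 := by
      have := congrArg (fun r => Polynomial.coeff r 1) h0
      simpa [hP] using this
    have e0 : c0 = 0 := by
      have := congrArg (fun r => Polynomial.coeff r 0) h0
      simpa [hP] using this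
    exact ⟨e2, by linear_combination e1, by linear_combination e0⟩
  have hdeg : P.natDegree ≤ 2 := by
    rw [hP]; compute_degree
  have hsub : (Finset.univ.filter fun x : ZMod p =>
      (q.1.1 * x + q.1.2) * (q.2.1.1 * x + q.2.1.2) = q.2.2.1 * x + q.2.2.2)
      ⊆ P.roots.toFinset := by
    intro a ha
    simp only [Finset.mem_filter] at ha
    rw [Multiset.mem_toFinset, Polynomial.mem_roots hPne, Polynomial.IsRoot.def]
    simp only [hP, Polynomial.eval_add, Polynomial.eval_mul, Polynomial.eval_C,
      Polynomial.eval_pow, Polynomial.eval_X]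
    rw [hc2, hc1, hc0]
    linear_combination ha.2
  calc _ ≤ P.roots.toFinset.card := Finset.card_le_card hsub
    _ ≤ Multiset.card P.roots := Multiset.toFinset_card_le _
    _ ≤ P.natDegree := Polynomial.card_roots' P
    _ ≤ 2 := hdeg

/-- Gap-DL lower bound: an adversary making (adaptively) at most `E` pair queries with
distinct affine-linear polynomials and at most `TDDH` DDH-triple queries `(P,Q,R)` with
`P·Q − R` a nonzero polynomial, whose guess is a function of the answer history, outputs
a uniform `x ∈ ZMod p` correctly with probability at most `(E + 2·TDDH + 1)/p`. -/
theorem stmt17 {p : ℕ} [Fact (Nat.Prime p)] (E TDDH : ℕ)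
    (A : List Bool → ((ZMod p × ZMod p) × (ZMod p × ZMod p)) ⊕
      ((ZMod p × ZMod p) × (ZMod p × ZMod p) × (ZMod p × ZMod p)))
    (hpair : ∀ h q, A h = Sum.inl q → q.1 ≠ q.2)
    (htriple : ∀ h q, A h = Sum.inr q →
      ¬(q.1.1 * q.2.1.1 = 0 ∧ q.1.1 * q.2.1.2 + q.1.2 * q.2.1.1 = q.2.2.1 ∧
        q.1.2 * q.2.1.2 = q.2.2.2))
    (hE : ∀ x : ZMod p,
      ((Finset.range (E + TDDH)).filter fun k => (A (runGap A x k)).isLeft).card ≤ E)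
    (hT : ∀ x : ZMod p,
      ((Finset.range (E + TDDH)).filter fun k => (A (runGap A x k)).isRight).card ≤ TDDH)
    (guess : List Bool → ZMod p) :
    ((Nat.card {x : ZMod p | guess (runGap A x (E + TDDH)) = x}) : ℝ) / (p : ℝ) ≤
      ((E : ℝ) + 2 * TDDH + 1) / (p : ℝ) := by
  classical
  have hpp : p.Prime := Fact.out
  haveI : NeZero p := ⟨hpp.ne_zero⟩
  set N := E + TDDH with hN
  -- the "agreement length" with the all-false history
  set m : ZMod p → ℕ := fun x =>
    Nat.findGreatest (fun k => runGap A x k = List.replicate k false) N with hm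
  have hm_le : ∀ x, m x ≤ N := fun x => Nat.findGreatest_le N
  have hm_spec : ∀ x, runGap A x (m x) = List.replicate (m x) false := fun x =>
    Nat.findGreatest_spec (P := fun k => runGap A x k = List.replicate k false)
      (Nat.zero_le N) rfl
  have hcoll : ∀ x, m x < N → ansG A x (List.replicate (m x) false) = true := by
    intro x hx
    by_contra hfalse
    rw [Bool.not_eq_true] at hfalse
    have hstep : runGap A x (m x + 1) = List.replicate (m x + 1) false := by
      rw [runGap_succ, hm_spec x, hfalse, ← List.replicate_succ']
    exact Nat.findGreatest_is_greatest (Nat.lt_succ_self _) hx hstep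
  -- a point with maximal agreement
  obtain ⟨xs, -, hxs⟩ := Finset.exists_max_image (Finset.univ : Finset (ZMod p)) m
    Finset.univ_nonempty
  -- the indices along the all-false path realized by xs
  set T : Finset ℕ :=
    (Finset.range N).filter (fun k => runGap A xs k = List.replicate k false) with hT'
  set Roots : ℕ → Finset (ZMod p) :=
    fun k => Finset.univ.filter fun x => ansG A x (List.replicate k false) = true
    with hRoots
  set Sf : Finset (ZMod p) := Finset.univ.filter fun x => guess (runGap A x N) = x with hSf
  have hsub : Sf ⊆ insert (guess (List.replicate N false)) (T.biUnion Roots) := by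
    intro x hx
    simp only [hSf, Finset.mem_filter] at hx
    rcases eq_or_lt_of_le (hm_le x) with heq | hlt
    · rw [Finset.mem_insert]
      left
      rw [← hx.2]
      congr 1
      rw [← heq]
      exact hm_spec x
    · rw [Finset.mem_insert]
      right
      rw [Finset.mem_biUnion]
      refine ⟨m x, ?_, ?_⟩
      · simp only [hT', Finset.mem_filter, Finset.mem_range]
        exact ⟨hlt, runGap_rep_of_le A xs (hxs x (Finset.mem_univ x)) (hm_spec xs)⟩
      · simp only [hRoots, Finset.mem_filter, Finset.mem_univ, true_and]
        exact hcoll x hlt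
  -- per-index root bounds
  have hroot_bound : ∀ k ∈ T, (Roots k).card ≤
      if (A (List.replicate k false)).isLeft then 1 else 2 := by
    intro k hk
    cases hA : A (List.replicate k false) with
    | inl q =>
      simp only [hA, Sum.isLeft, if_pos]
      have : Roots k = Finset.univ.filter fun x : ZMod p =>
          q.1.1 * x + q.1.2 = q.2.1 * x + q.2.2 := by
        apply Finset.filter_congr
        intro x _
        simp [ansG, hA]
      rw [this]
      exact pair_card q (hpair _ q hA)
    | inr q =>
      simp only [hA, Sum.isLeft, if_neg]
      have : Roots k = Finset.univ.filter fun x : ZMod p =>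
          (q.1.1 * x + q.1.2) * (q.2.1.1 * x + q.2.1.2) = q.2.2.1 * x + q.2.2.2 := by
        apply Finset.filter_congr
        intro x _
        simp [ansG, hA]
      rw [this]
      exact triple_card q (htriple _ q hA)
  -- split T into pair and triple indices, bounded via xs
  have hTL : (T.filter fun k => (A (List.replicate k false)).isLeft).card ≤ E := by
    refine le_trans (Finset.card_le_card ?_) (hE xs)
    intro k hk
    simp only [hT', Finset.mem_filter, Finset.mem_range] at hk ⊢
    exact ⟨hk.1.1, by rw [hk.1.2]; exact hk.2⟩
  have hTR : (T.filter fun k => ¬(A (List.replicate k false)).isLeft).card ≤ TDDH := by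
    refine le_trans (Finset.card_le_card ?_) (hT xs)
    intro k hk
    simp only [hT', Finset.mem_filter, Finset.mem_range] at hk ⊢
    refine ⟨hk.1.1, ?_⟩
    rw [hk.1.2]
    rw [Sum.not_isLeft] at hk
    exact hk.2
  have hsum : ∑ k ∈ T, (Roots k).card ≤ E + 2 * TDDH := by
    rw [← Finset.sum_filter_add_sum_filter_not T
      (fun k => (A (List.replicate k false)).isLeft)]
    have h1 : ∑ k ∈ T.filter (fun k => (A (List.replicate k false)).isLeft),
        (Roots k).card ≤ E := by
      calc _ ≤ ∑ _k ∈ T.filter (fun k => (A (List.replicate k false)).isLeft), 1 := by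
              apply Finset.sum_le_sum
              intro k hk
              have := hroot_bound k (Finset.mem_of_mem_filter k hk)
              rw [if_pos (Finset.mem_filter.mp hk).2] at this
              exact this
        _ ≤ E := by rw [Finset.sum_const, smul_eq_mul, mul_one]; exact hTL
    have h2 : ∑ k ∈ T.filter (fun k => ¬(A (List.replicate k false)).isLeft),
        (Roots k).card ≤ 2 * TDDH := by
      calc _ ≤ ∑ _k ∈ T.filter (fun k => ¬(A (List.replicate k false)).isLeft), 2 := by
              apply Finset.sum_le_sum
              intro k hk
              have := hroot_bound k (Finset.mem_of_mem_filter k hk)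
              rw [if_neg (Finset.mem_filter.mp hk).2] at this
              exact this
        _ ≤ 2 * TDDH := by
              rw [Finset.sum_const, smul_eq_mul, mul_comm]
              exact Nat.mul_le_mul_left 2 hTR
    omega
  have hcard : Sf.card ≤ E + 2 * TDDH + 1 := by
    calc Sf.card ≤ (insert (guess (List.replicate N false)) (T.biUnion Roots)).card :=
          Finset.card_le_card hsub
      _ ≤ (T.biUnion Roots).card + 1 := Finset.card_insert_le _ _
      _ ≤ (∑ k ∈ T, (Roots k).card) + 1 := by
          exact Nat.add_le_add_right (Finset.card_biUnion_le) 1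
      _ ≤ E + 2 * TDDH + 1 := Nat.add_le_add_right hsum 1
  have hNat : Nat.card {x : ZMod p | guess (runGap A x N) = x} = Sf.card := by
    rw [Nat.card_coe_set_eq, Set.ncard_eq_toFinset_card']
    congr 1
    ext x
    simp [hSf]
  rw [hNat]
  have hp0 : (0 : ℝ) < p := by exact_mod_cast hpp.pos
  gcongr
  exact_mod_cast hcard
end

section
/- Fix a prime p and t ≥ 1. Let Z ⊆ Z_p[X_1,...,X_t] be a set of affine-linear polynomials, and for x ∈ Z_p^t let A(x) = {polynomials in Z vanishing at x}. If P, Q are affine-linear polynomials with P − Q not in the linear span of Z, and x is uniform on the nonempty set {x : all polynomials in Z vanish at x}, then Pr[P(x) = Q(x)] ≤ 1/p. -/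
open Finset

variable {p t : ℕ} [Fact (Nat.Prime p)]

/-- The self-pairing on `ZMod p × (Fin t → ZMod p)`. -/
noncomputable def pairA (p t : ℕ) :
    (ZMod p × (Fin t → ZMod p)) →ₗ[ZMod p]
      (ZMod p × (Fin t → ZMod p)) →ₗ[ZMod p] ZMod p :=
  LinearMap.mk₂ (ZMod p) (fun a v => a.1 * v.1 + ∑ j, a.2 j * v.2 j)
    (by intro a b v; simp [add_mul, Finset.sum_add_distrib]; ring)
    (by intro c a v; simp [smul_eq_mul, Finset.mul_sum, mul_add, mul_assoc])
    (by intro a v w; simp [mul_add, Finset.sum_add_distrib]; ring)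
    (by intro c a v
        simp only [Prod.smul_fst, Prod.smul_snd, smul_eq_mul, Pi.smul_apply,
          Finset.mul_sum, mul_add]
        exact congrArg₂ (· + ·) (by ring) (Finset.sum_congr rfl fun j _ => by ring))

lemma pairA_inj : Function.Injective (pairA p t) := by
  have h0 : ∀ a : ZMod p × (Fin t → ZMod p), pairA p t a = 0 → a = 0 := by
    intro a ha
    have h1 : a.1 = 0 := by
      have := congrArg (fun L => L ((1 : ZMod p), (0 : Fin t → ZMod p))) ha
      simpa [pairA, LinearMap.mk₂] using this
    have h2 : ∀ j, a.2 j = 0 := by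
      intro j
      have := congrArg (fun L => L ((0 : ZMod p), (Pi.single j 1 : Fin t → ZMod p))) ha
      simpa [pairA, LinearMap.mk₂, Pi.single_apply, mul_ite, Finset.sum_ite_eq'] using this
    have : a = (a.1, a.2) := rfl
    rw [this, h1]
    ext j
    · rfl
    · exact h2 j
  intro a b hab
  have h : pairA p t (a - b) = 0 := by rw [map_sub, hab, sub_self]
  exact sub_eq_zero.mp (h0 _ h)

lemma sum_mul_add (a b c : Fin t → ZMod p) :
    ∑ j, a j * (b j + c j) = ∑ j, a j * b j + ∑ j, a j * c j := by
  rw [← Finset.sum_add_distrib]; exact Finset.sum_congr rfl fun j _ => by ring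

lemma sum_mul_const (a b : Fin t → ZMod p) (c : ZMod p) :
    ∑ j, a j * (c * b j) = c * ∑ j, a j * b j := by
  rw [Finset.mul_sum]; exact Finset.sum_congr rfl fun j _ => by ring

lemma span_of_vanish (Z : Finset (ZMod p × (Fin t → ZMod p)))
    (R : ZMod p × (Fin t → ZMod p)) (x0 : Fin t → ZMod p)
    (hx0 : ∀ S ∈ Z, S.1 + ∑ j, S.2 j * x0 j = 0)
    (hR : ∀ x : Fin t → ZMod p, (∀ S ∈ Z, S.1 + ∑ j, S.2 j * x j = 0) →
      R.1 + ∑ j, R.2 j * x j = 0) :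
    R ∈ Submodule.span (ZMod p) (Z : Set (ZMod p × (Fin t → ZMod p))) := by
  have key : (⨅ S : Z, LinearMap.ker (pairA p t S.1)) ≤ LinearMap.ker (pairA p t R) := by
    intro v hv
    simp only [Submodule.mem_iInf, LinearMap.mem_ker] at hv ⊢
    have hv' : ∀ S ∈ Z, S.1 * v.1 + ∑ j, S.2 j * v.2 j = 0 := fun S hS => hv ⟨S, hS⟩
    have hpair : ∀ w : ZMod p × (Fin t → ZMod p),
        pairA p t R w = R.1 * w.1 + ∑ j, R.2 j * w.2 j := fun w => rfl
    rw [hpair]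
    by_cases hs : v.1 = 0
    · have hmem : ∀ S ∈ Z, S.1 + ∑ j, S.2 j * (x0 j + v.2 j) = 0 := by
        intro S hS
        have hA := hx0 S hS
        have hB := hv' S hS
        rw [sum_mul_add]
        linear_combination hA + hB - S.1 * hs
      have h1 := hR _ hmem
      have h0 := hR _ hx0
      rw [sum_mul_add] at h1
      linear_combination h1 - h0 + R.1 * hs
    · have hinv : v.1⁻¹ * v.1 = 1 := inv_mul_cancel₀ hs
      have hinv' : v.1 * v.1⁻¹ = 1 := mul_inv_cancel₀ hs
      have hmem : ∀ S ∈ Z, S.1 + ∑ j, S.2 j * (v.1⁻¹ * v.2 j) = 0 := by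
        intro S hS
        have hB := hv' S hS
        rw [sum_mul_const]
        linear_combination v.1⁻¹ * hB - S.1 * hinv
      have h1 := hR _ hmem
      rw [sum_mul_const] at h1
      linear_combination v.1 * h1 - (∑ j, R.2 j * v.2 j) * hinv'
  have hKspan := mem_span_of_iInf_ker_le_ker key
  have hrange : Set.range (fun S : Z => pairA p t S.1) =
      pairA p t '' (Z : Set (ZMod p × (Fin t → ZMod p))) := by
    ext y
    constructor
    · rintro ⟨S, rfl⟩; exact ⟨S.1, by simpa using S.2, rfl⟩
    · rintro ⟨s, hs, rfl⟩; exact ⟨⟨s, by simpa using hs⟩, rfl⟩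
  rw [hrange, ← Submodule.map_span] at hKspan
  obtain ⟨r, hr, hrR⟩ := hKspan
  rwa [← pairA_inj hrR]

open Finset

variable {p t : ℕ} [Fact (Nat.Prime p)]

lemma sum_mul_sub (a b c : Fin t → ZMod p) :
    ∑ j, a j * (b j - c j) = ∑ j, a j * b j - ∑ j, a j * c j := by
  rw [← Finset.sum_sub_distrib]; exact Finset.sum_congr rfl fun j _ => by ring



/-- Informative-collision bound, restated: if `x` is uniform on the (nonempty) common zero
set of a set `Z` of affine-linear polynomials and `P − Q` is not in the span of `Z`
(identifying affine-linear polynomials with vectors in `(ZMod p)^{t+1}`), then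
`P(x) = Q(x)` with probability at most `1/p`. -/
theorem stmt18 {p t : ℕ} [Fact (Nat.Prime p)] (ht : 1 ≤ t)
    (Z : Finset (ZMod p × (Fin t → ZMod p)))
    (P Q : ZMod p × (Fin t → ZMod p))
    (hPQ : P - Q ∉ Submodule.span (ZMod p) (Z : Set (ZMod p × (Fin t → ZMod p))))
    (hne : (Finset.univ.filter fun x : Fin t → ZMod p =>
        ∀ S ∈ Z, S.1 + ∑ j, S.2 j * x j = 0).Nonempty) :
    ((Finset.univ.filter fun x : Fin t → ZMod p =>
        (∀ S ∈ Z, S.1 + ∑ j, S.2 j * x j = 0) ∧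
          P.1 + ∑ j, P.2 j * x j = Q.1 + ∑ j, Q.2 j * x j).card : ℝ) /
      ((Finset.univ.filter fun x : Fin t → ZMod p =>
        ∀ S ∈ Z, S.1 + ∑ j, S.2 j * x j = 0).card : ℝ) ≤ 1 / (p : ℝ) := by
  classical
  haveI : NeZero p := ⟨(Fact.out : p.Prime).ne_zero⟩
  set f : (Fin t → ZMod p) → ZMod p :=
    fun x => (P.1 - Q.1) + ∑ j, (P.2 j - Q.2 j) * x j with hf
  have hsum : ∀ x : Fin t → ZMod p,
      ∑ j, (P.2 j - Q.2 j) * x j = ∑ j, P.2 j * x j - ∑ j, Q.2 j * x j := by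
    intro x; rw [← Finset.sum_sub_distrib]; exact Finset.sum_congr rfl fun j _ => by ring
  have hiff : ∀ x : Fin t → ZMod p,
      (P.1 + ∑ j, P.2 j * x j = Q.1 + ∑ j, Q.2 j * x j) ↔ f x = 0 := by
    intro x
    rw [hf]; simp only
    rw [hsum x]
    constructor
    · intro h; linear_combination h
    · intro h; linear_combination h
  set N : Finset (Fin t → ZMod p) :=
    Finset.univ.filter fun x => ∀ S ∈ Z, S.1 + ∑ j, S.2 j * x j = 0 with hN
  have hNmem : ∀ x, x ∈ N ↔ ∀ S ∈ Z, S.1 + ∑ j, S.2 j * x j = 0 := by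
    intro x; rw [hN]; simp [Finset.mem_filter]
  have hNc : (Finset.univ.filter fun x : Fin t → ZMod p =>
      (∀ S ∈ Z, S.1 + ∑ j, S.2 j * x j = 0) ∧
        P.1 + ∑ j, P.2 j * x j = Q.1 + ∑ j, Q.2 j * x j) =
      N.filter fun x => f x = 0 := by
    rw [hN, Finset.filter_filter]
    exact Finset.filter_congr fun x _ => and_congr_right fun _ => hiff x
  have hNpos : 0 < N.card := Finset.card_pos.mpr hne
  have hppos : 0 < p := (Fact.out : p.Prime).pos
  rw [hNc]
  by_cases hcol : (N.filter fun x => f x = 0).Nonempty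
  swap
  · rw [Finset.not_nonempty_iff_eq_empty] at hcol
    rw [hcol]
    simp only [Finset.card_empty, Nat.cast_zero, zero_div]
    positivity
  obtain ⟨x0, hx0'⟩ := hcol
  obtain ⟨hx0N, hfx0⟩ := Finset.mem_filter.mp hx0'
  have hx0Z := (hNmem x0).mp hx0N
  have hex1 : ∃ x1, (∀ S ∈ Z, S.1 + ∑ j, S.2 j * x1 j = 0) ∧ f x1 ≠ 0 := by
    by_contra hcon
    push_neg at hcon
    apply hPQ
    apply span_of_vanish Z (P - Q) x0 hx0Z
    intro x hx
    have h := hcon x hx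
    rw [hf] at h; simp only at h
    rw [hsum x] at h
    simp only [Prod.fst_sub, Prod.snd_sub, Pi.sub_apply]
    rw [hsum x]
    linear_combination h
  obtain ⟨x1, hx1Z, hfx1⟩ := hex1
  set d : Fin t → ZMod p := fun j => x1 j - x0 j with hd
  set δ : ZMod p := ∑ j, (P.2 j - Q.2 j) * d j with hδ
  have hδval : δ = f x1 - f x0 := by
    rw [hδ, hd, hf]; simp only
    rw [sum_mul_sub]
    ring
  have hδne : δ ≠ 0 := by rw [hδval, hfx0, sub_zero]; exact hfx1
  have hdS : ∀ S ∈ Z, ∑ j, S.2 j * d j = 0 := by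
    intro S hS
    have h1 := hx1Z S hS
    have h0 := hx0Z S hS
    rw [hd]; rw [sum_mul_sub]
    linear_combination h1 - h0
  have hmemN : ∀ x, x ∈ N → ∀ c : ZMod p, (fun j => x j + c * d j) ∈ N := by
    intro x hx c
    rw [hNmem] at hx ⊢
    intro S hS
    have h := hx S hS
    have hdz := hdS S hS
    rw [sum_mul_add, sum_mul_const]
    linear_combination h + c * hdz
  have hfshift : ∀ (x : Fin t → ZMod p) (c : ZMod p),
      f (fun j => x j + c * d j) = f x + c * δ := by
    intro x c
    rw [hf, hδ]; simp only
    rw [sum_mul_add, sum_mul_const]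
    ring
  have hfiber : ∀ v : ZMod p,
      (N.filter fun x => f x = 0).card ≤ (N.filter fun x => f x = v).card := by
    intro v
    apply Finset.card_le_card_of_injOn (fun x => fun j => x j + (v * δ⁻¹) * d j)
    · intro x hx
      obtain ⟨hxN, hx0⟩ := Finset.mem_filter.mp hx
      refine Finset.mem_filter.mpr ⟨hmemN x hxN _, ?_⟩
      rw [hfshift, hx0, zero_add, mul_assoc, inv_mul_cancel₀ hδne, mul_one]
    · intro a _ b _ hab
      funext j
      have := congrFun hab j
      exact add_right_cancel this
  have hsumcard : N.card = ∑ v : ZMod p, (N.filter fun x => f x = v).card :=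
    Finset.card_eq_sum_card_fiberwise fun x _ => Finset.mem_univ (f x)
  have hcount : p * (N.filter fun x => f x = 0).card ≤ N.card := by
    rw [hsumcard]
    calc p * (N.filter fun x => f x = 0).card
        = ∑ _v : ZMod p, (N.filter fun x => f x = 0).card := by
          rw [Finset.sum_const, Finset.card_univ, ZMod.card, smul_eq_mul]
      _ ≤ ∑ v : ZMod p, (N.filter fun x => f x = v).card :=
          Finset.sum_le_sum fun v _ => hfiber v
  rw [div_le_div_iff₀ (by exact_mod_cast hNpos) (by exact_mod_cast hppos)]
  have hc : ((p * (N.filter fun x => f x = 0).card : ℕ) : ℝ) ≤ (N.card : ℝ) := by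
    exact_mod_cast hcount
  push_cast at hc
  linarith
end
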